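/- (Guaranteed quadratic convergence on the reduced problem.) Consider a POP and a point x* satisfying the KKT conditions with multiplier λ* such that λ*_i = 0 for all i ∈ I \ A*, and suppose LICQ and SOSC hold at (x*,λ*). Let F = F_{A*} be the reduced KKT map associated with the active set A*, and let z* = (x*, (λ*_i)_{i∈E∪A*}). Then there exists a neighborhood of z* on which DF is invertible and hat-α(F, ·) ≤ (13 − 3√17)/4. -/

import Mathlib

open MvPolynomial Metric Filter Matrix

variable {ι : Type*} [Fintype ι] [DecidableEq ι]

/-- Evaluation map of a polynomial system F : ℝᴺ → ℝᴺ. -/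
noncomputable def evalMap (F : ι → MvPolynomial ι ℝ) (z : EuclideanSpace ℝ ι) :
    EuclideanSpace ℝ ι :=
  WithLp.toLp 2 (fun i => MvPolynomial.eval (fun j => z j) (F i))

/-- Jacobian matrix DF(z). -/
noncomputable def jacMat (F : ι → MvPolynomial ι ℝ) (z : EuclideanSpace ℝ ι) : Matrix ι ι ℝ :=
  Matrix.of fun i j => MvPolynomial.eval (fun k => z k) (MvPolynomial.pderiv j (F i))

/-- Newton iteration N_F(z) = z - DF(z)⁻¹ F(z). -/
noncomputable def newtonStep (F : ι → MvPolynomial ι ℝ) (z : EuclideanSpace ℝ ι) :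
    EuclideanSpace ℝ ι :=
  z - (Matrix.toEuclideanCLM (𝕜 := ℝ) (jacMat F z)⁻¹) (evalMap F z)

/-- Newton sequence started at z. -/
noncomputable def newtonSeq (F : ι → MvPolynomial ι ℝ) (z : EuclideanSpace ℝ ι) :
    ℕ → EuclideanSpace ℝ ι
  | 0 => z
  | k + 1 => newtonStep F (newtonSeq F z k)

/-- β(F,z) = ‖DF(z)⁻¹ F(z)‖. -/
noncomputable def betaS (F : ι → MvPolynomial ι ℝ) (z : EuclideanSpace ℝ ι) : ℝ :=
  ‖(Matrix.toEuclideanCLM (𝕜 := ℝ) (jacMat F z)⁻¹) (evalMap F z)‖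

/-- Squared Bombieri–Weyl norm of a polynomial, relative to degree `d`. -/
noncomputable def bwNormSq (d : ℕ) (p : MvPolynomial ι ℝ) : ℝ :=
  ∑ ν ∈ p.support, (p.coeff ν) ^ 2 *
    (((∏ i, Nat.factorial (ν i)) * Nat.factorial (d - ∑ i, ν i) : ℕ) : ℝ) / (Nat.factorial d : ℝ)

/-- Bombieri–Weyl norm ‖F‖_p of a polynomial system. -/
noncomputable def bwSysNorm (F : ι → MvPolynomial ι ℝ) : ℝ :=
  Real.sqrt (∑ i, bwNormSq (F i).totalDegree (F i))

/-- ‖z‖₁ = (1 + Σ zᵢ²)^{1/2}. -/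
noncomputable def norm1 (z : EuclideanSpace ℝ ι) : ℝ :=
  Real.sqrt (1 + ∑ i, (z i) ^ 2)

/-- Diagonal matrix Δ_(d)(z) with entries dᵢ^{1/2}‖z‖₁^{dᵢ-1}. -/
noncomputable def deltaMat (F : ι → MvPolynomial ι ℝ) (z : EuclideanSpace ℝ ι) : Matrix ι ι ℝ :=
  Matrix.diagonal fun i => Real.sqrt ((F i).totalDegree : ℝ) * norm1 z ^ ((F i).totalDegree - 1)

/-- μ(F,z) = max{1, ‖F‖_p ‖DF(z)⁻¹ Δ_(d)(z)‖}. -/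
noncomputable def muS (F : ι → MvPolynomial ι ℝ) (z : EuclideanSpace ℝ ι) : ℝ :=
  max 1 (bwSysNorm F * ‖Matrix.toEuclideanCLM (𝕜 := ℝ) ((jacMat F z)⁻¹ * deltaMat F z)‖)

/-- Maximal degree of the system. -/
def maxDeg (F : ι → MvPolynomial ι ℝ) : ℕ :=
  Finset.univ.sup fun i => (F i).totalDegree

/-- hat-α(F,z) = β(F,z)·μ(F,z)·(max dᵢ)^{3/2} / (2‖z‖₁). -/
noncomputable def hatAlpha (F : ι → MvPolynomial ι ℝ) (z : EuclideanSpace ℝ ι) : ℝ :=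
  betaS F z * muS F z * ((maxDeg F : ℝ) ^ ((3:ℝ)/2)) / (2 * norm1 z)

/-- Evaluation of a polynomial at a Euclidean point. -/
noncomputable def peval {n : ℕ} (x : EuclideanSpace ℝ (Fin n)) (p : MvPolynomial (Fin n) ℝ) : ℝ :=
  MvPolynomial.eval (fun i => x i) p

/-- Gradient of a polynomial at a point. -/
noncomputable def pgrad {n : ℕ} (p : MvPolynomial (Fin n) ℝ) (x : EuclideanSpace ℝ (Fin n)) :
    EuclideanSpace ℝ (Fin n) :=
  WithLp.toLp 2 (fun i => peval x (MvPolynomial.pderiv i p))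

/-- KKT conditions at (x, λ): stationarity of the Lagrangian, primal feasibility,
dual feasibility, and complementarity. -/
def IsKKT {n m : ℕ} (f : MvPolynomial (Fin n) ℝ) (g : Fin m → MvPolynomial (Fin n) ℝ)
    (Eqs : Finset (Fin m)) (x : EuclideanSpace ℝ (Fin n)) (lam : EuclideanSpace ℝ (Fin m)) : Prop :=
  pgrad f x - ∑ i, lam i • pgrad (g i) x = 0 ∧
  (∀ j ∈ Eqs, peval x (g j) = 0) ∧
  (∀ i ∉ Eqs, 0 ≤ peval x (g i) ∧ 0 ≤ lam i ∧ lam i * peval x (g i) = 0)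

/-- Lagrangian polynomial x ↦ L(x,λ) for fixed λ. -/
noncomputable def lagPoly {n m : ℕ} (f : MvPolynomial (Fin n) ℝ)
    (g : Fin m → MvPolynomial (Fin n) ℝ) (lam : EuclideanSpace ℝ (Fin m)) :
    MvPolynomial (Fin n) ℝ :=
  f - ∑ i, MvPolynomial.C (lam i) * g i

/-- LICQ w.r.t. the index set K = E ∪ A*. -/
def LICQat {n m : ℕ} (g : Fin m → MvPolynomial (Fin n) ℝ) (K : Finset (Fin m))
    (x : EuclideanSpace ℝ (Fin n)) : Prop :=
  LinearIndependent ℝ (fun i : {i // i ∈ K} => pgrad (g i.1) x)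

/-- Second-order sufficient condition w.r.t. K = E ∪ A*. -/
def SOSCat {n m : ℕ} (f : MvPolynomial (Fin n) ℝ) (g : Fin m → MvPolynomial (Fin n) ℝ)
    (K : Finset (Fin m)) (x : EuclideanSpace ℝ (Fin n)) (lam : EuclideanSpace ℝ (Fin m)) : Prop :=
  ∀ v : EuclideanSpace ℝ (Fin n), v ≠ 0 →
    (∀ i ∈ K, ∑ k, v k * peval x (MvPolynomial.pderiv k (g i)) = 0) →
    0 < ∑ j, ∑ k, v j * v k *
      peval x (MvPolynomial.pderiv j (MvPolynomial.pderiv k (lagPoly f g lam)))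

/-- The reduced KKT polynomial map F_A for the index set K = E ∪ A. -/
noncomputable def redKKT {n m : ℕ} (f : MvPolynomial (Fin n) ℝ)
    (g : Fin m → MvPolynomial (Fin n) ℝ) (K : Finset (Fin m)) :
    (Fin n ⊕ {i // i ∈ K}) → MvPolynomial (Fin n ⊕ {i // i ∈ K}) ℝ :=
  fun v => match v with
  | Sum.inl j => MvPolynomial.rename Sum.inl (MvPolynomial.pderiv j f)
      - ∑ i : {i // i ∈ K},
          MvPolynomial.X (Sum.inr i) * MvPolynomial.rename Sum.inl (MvPolynomial.pderiv j (g i.1))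
  | Sum.inr i => MvPolynomial.rename Sum.inl (g i.1)

/-- Pairing a primal point with a reduced multiplier vector as a point for F_A. -/
noncomputable def pairPointK {n m : ℕ} (K : Finset (Fin m)) (x : EuclideanSpace ℝ (Fin n))
    (μ : EuclideanSpace ℝ {i // i ∈ K}) : EuclideanSpace ℝ (Fin n ⊕ {i // i ∈ K}) :=
  WithLp.toLp 2 (fun v => Sum.elim (fun j => x j) (fun i => μ i) v)


section MyAuxiliary
open MvPolynomial

lemma aux_euc_sum_apply {γ A : Type*} [Fintype γ] (s : Finset A)
    (F : A → EuclideanSpace ℝ γ) (j : γ) :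
    (∑ i ∈ s, F i) j = ∑ i ∈ s, F i j := by
  induction s using Finset.cons_induction with
  | empty => rfl
  | cons a s ha ih => rw [Finset.sum_cons, Finset.sum_cons, PiLp.add_apply, ih]

lemma aux_polyCont {γ : Type*} [Fintype γ] (p : MvPolynomial γ ℝ) :
    Continuous fun z : EuclideanSpace ℝ γ => MvPolynomial.eval (fun j => z j) p := by
  induction p using MvPolynomial.induction_on with
  | C a => simpa using continuous_const
  | add p q hp hq => simpa [Pi.add_def] using hp.add hq
  | mul_X p i hp => simpa [Pi.mul_def] using hp.mul (PiLp.continuous_apply 2 _ i)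

noncomputable def auxClmOfMat (γ : Type*) [Fintype γ] [DecidableEq γ] :
    Matrix γ γ ℝ →ₗ[ℝ] (EuclideanSpace ℝ γ →L[ℝ] EuclideanSpace ℝ γ) where
  toFun M := Matrix.toEuclideanCLM (𝕜 := ℝ) M
  map_add' a b := map_add _ a b
  map_smul' c a := map_smul _ c a

lemma aux_pderiv_inr_rename {n : ℕ} {κ : Type*} (i : κ) (p : MvPolynomial (Fin n) ℝ) :
    pderiv (Sum.inr i : Fin n ⊕ κ) (rename Sum.inl p) = 0 :=
  pderiv_eq_zero_of_notMem_vars (fun h => by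
    obtain ⟨j, -, hj⟩ := mem_vars_rename _ _ h
    exact Sum.inl_ne_inr hj)

lemma aux_pderiv_inl_mul {n : ℕ} {κ : Type*} (k : Fin n) (i : κ) (q : MvPolynomial (Fin n) ℝ) :
    pderiv (Sum.inl k : Fin n ⊕ κ) (X (Sum.inr i) * rename Sum.inl q)
      = X (Sum.inr i) * rename Sum.inl (pderiv k q) := by
  rw [pderiv_mul, pderiv_X_of_ne (by simp), pderiv_rename Sum.inl_injective, zero_mul, zero_add]

lemma aux_pderiv_inl_sum {n : ℕ} {κ : Type*} [Fintype κ] [DecidableEq κ] (k : Fin n)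
    (q : κ → MvPolynomial (Fin n) ℝ) :
    pderiv (Sum.inl k : Fin n ⊕ κ) (∑ i : κ, X (Sum.inr i) * rename Sum.inl (q i))
      = ∑ i : κ, X (Sum.inr i) * rename Sum.inl (pderiv k (q i)) := by
  rw [map_sum]
  exact Finset.sum_congr rfl fun i _ => aux_pderiv_inl_mul k i (q i)

lemma aux_pderiv_inr_sum {n : ℕ} {κ : Type*} [Fintype κ] [DecidableEq κ] (i' : κ)
    (q : κ → MvPolynomial (Fin n) ℝ) :
    pderiv (Sum.inr i' : Fin n ⊕ κ) (∑ i : κ, X (Sum.inr i) * rename Sum.inl (q i))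
      = rename Sum.inl (q i') := by
  rw [map_sum, Finset.sum_eq_single i']
  · rw [pderiv_mul, pderiv_X_self, aux_pderiv_inr_rename, one_mul, mul_zero, add_zero]
  · intro b _ hb
    rw [pderiv_mul, pderiv_X_of_ne (by simpa using hb), aux_pderiv_inr_rename, zero_mul,
      mul_zero, add_zero]
  · simp

end MyAuxiliary


set_option maxHeartbeats 2000000 in
lemma aux_main {γ : Type*} [Fintype γ] [DecidableEq γ] (F : γ → MvPolynomial γ ℝ)
    (zs : EuclideanSpace ℝ γ) (hdet : (jacMat F zs).det ≠ 0) (hFz : evalMap F zs = 0)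
    {c : ℝ} (hc : 0 < c) :
    ∃ ε > (0:ℝ), ∀ z : EuclideanSpace ℝ γ, ‖z - zs‖ ≤ ε →
      IsUnit (jacMat F z) ∧ hatAlpha F z ≤ c := by
  have hcontJ : Continuous fun z : EuclideanSpace ℝ γ => jacMat F z :=
    continuous_matrix fun a b => aux_polyCont (MvPolynomial.pderiv b (F a))
  have hcontdet : Continuous fun z : EuclideanSpace ℝ γ => (jacMat F z).det :=
    hcontJ.matrix_det
  have hinv : ContinuousAt (fun z => (jacMat F z)⁻¹) zs := by
    have heq : (fun z : EuclideanSpace ℝ γ => (jacMat F z)⁻¹)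
        = fun z => ((jacMat F z).det)⁻¹ • (jacMat F z).adjugate := by
      funext z
      rw [Matrix.inv_def, Ring.inverse_eq_inv']
    rw [heq]
    exact (hcontdet.continuousAt.inv₀ hdet).smul hcontJ.matrix_adjugate.continuousAt
  have hclmcont : Continuous fun M : Matrix γ γ ℝ => Matrix.toEuclideanCLM (𝕜 := ℝ) M :=
    by have := (auxClmOfMat γ).continuous_of_finiteDimensional; exact this
  have hcontev : Continuous fun z : EuclideanSpace ℝ γ => evalMap F z :=
    (PiLp.continuous_toLp 2 _).comp (continuous_pi fun i => aux_polyCont (F i))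
  have happ0 : Continuous fun p : ((EuclideanSpace ℝ γ →L[ℝ] EuclideanSpace ℝ γ)
      × EuclideanSpace ℝ γ) => p.1 p.2 :=
    isBoundedBilinearMap_apply.continuous
  have hβ : ContinuousAt (fun z => betaS F z) zs := by
    have happ : ContinuousAt (fun z =>
        (Matrix.toEuclideanCLM (𝕜 := ℝ) ((jacMat F z)⁻¹)) (evalMap F z)) zs :=
      by have := happ0.continuousAt.comp (x := zs) ((hclmcont.continuousAt.comp hinv).prodMk hcontev.continuousAt); exact this
    exact happ.norm
  have hnorm1cont : Continuous fun z : EuclideanSpace ℝ γ => norm1 z :=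
    Real.continuous_sqrt.comp (continuous_const.add
      (continuous_finset_sum _ fun i _ => (PiLp.continuous_apply 2 _ i).pow 2))
  have hcontdelta : Continuous fun z : EuclideanSpace ℝ γ => deltaMat F z :=
    Continuous.matrix_diagonal (continuous_pi fun i =>
      continuous_const.mul (hnorm1cont.pow _))
  have hμ : ContinuousAt (fun z => muS F z) zs := by
    have hmulm : ContinuousAt (fun z => (jacMat F z)⁻¹ * deltaMat F z) zs :=
      by have := continuous_mul.continuousAt.comp (x := zs) (hinv.prodMk hcontdelta.continuousAt); exact this
    exact continuousAt_const.max
      (((hclmcont.continuousAt.comp hmulm).norm).const_mul _)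
  have hnorm1pos : (0:ℝ) < norm1 zs := Real.sqrt_pos.mpr (by positivity)
  have hhat : ContinuousAt (fun z => hatAlpha F z) zs :=
    ((hβ.mul hμ).mul continuousAt_const).div
      (continuousAt_const.mul hnorm1cont.continuousAt) (by positivity)
  have hval : hatAlpha F zs = 0 := by
    have hb : betaS F zs = 0 := by
      rw [betaS, hFz, map_zero, norm_zero]
    rw [hatAlpha, hb, zero_mul, zero_mul, zero_div]
  have h1 : ∀ᶠ z in nhds zs, hatAlpha F z < c := by
    have ht : Filter.Tendsto (fun z => hatAlpha F z) (nhds zs) (nhds 0) := by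
      rw [← hval]; exact hhat
    exact ht.eventually (eventually_lt_nhds hc)
  have h2 : ∀ᶠ z in nhds zs, (jacMat F z).det ≠ 0 :=
    (isOpen_compl_singleton.preimage hcontdet).mem_nhds hdet
  obtain ⟨ε, hε, hball⟩ := Metric.eventually_nhds_iff.mp (h1.and h2)
  refine ⟨ε / 2, by positivity, fun z hz => ?_⟩
  have hdz : dist z zs < ε := by
    rw [dist_eq_norm]
    linarith
  obtain ⟨hA, hB⟩ := hball hdz
  exact ⟨(Matrix.isUnit_iff_isUnit_det _).2 (isUnit_iff_ne_zero.2 hB), le_of_lt hA⟩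

/-- Guaranteed quadratic convergence on the reduced problem. -/
theorem hat_alpha_holds_near_reduced_solution {n m : ℕ} (f : MvPolynomial (Fin n) ℝ)
    (g : Fin m → MvPolynomial (Fin n) ℝ) (Eqs : Finset (Fin m))
    (xs : EuclideanSpace ℝ (Fin n)) (lams : EuclideanSpace ℝ (Fin m))
    (hkkt : IsKKT f g Eqs xs lams)
    (hinact : ∀ i, i ∉ Eqs → peval xs (g i) ≠ 0 → lams i = 0)
    (K : Finset (Fin m)) (hK : ∀ i, i ∈ K ↔ i ∈ Eqs ∨ peval xs (g i) = 0)
    (hlicq : LICQat g K xs) (hsosc : SOSCat f g K xs lams) :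
    ∃ ε > (0:ℝ), ∀ z : EuclideanSpace ℝ (Fin n ⊕ {i // i ∈ K}),
      ‖z - pairPointK K xs (WithLp.toLp 2 (fun i => lams i.1))‖ ≤ ε →
      IsUnit (jacMat (redKKT f g K) z) ∧
      hatAlpha (redKKT f g K) z ≤ (13 - 3 * Real.sqrt 17) / 4 := by
  
  classical
  have hc : (0:ℝ) < (13 - 3 * Real.sqrt 17) / 4 := by
    nlinarith [Real.sq_sqrt (show (0:ℝ) ≤ 17 by norm_num), Real.sqrt_nonneg 17]
  set F := redKKT f g K with hFdef
  set zs := pairPointK K xs (WithLp.toLp 2 (fun i => lams i.1)) with hzsdef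
  have hred1 : ∀ j : Fin n, F (Sum.inl j) = MvPolynomial.rename Sum.inl (MvPolynomial.pderiv j f)
      - ∑ i : {i // i ∈ K}, MvPolynomial.X (Sum.inr i)
        * MvPolynomial.rename Sum.inl (MvPolynomial.pderiv j (g i.1)) := fun j => rfl
  have hred2 : ∀ i : {i // i ∈ K}, F (Sum.inr i) = MvPolynomial.rename Sum.inl (g i.1) :=
    fun i => rfl
  have heval_ren : ∀ p : MvPolynomial (Fin n) ℝ,
      MvPolynomial.eval (fun v => zs v) (MvPolynomial.rename Sum.inl p) = peval xs p := by
    intro p; rw [MvPolynomial.eval_rename]; rfl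
  have hlam0 : ∀ i, i ∉ K → lams i = 0 := by
    intro i hi
    rw [hK] at hi; push_neg at hi
    exact hinact i hi.1 hi.2
  have hres : ∀ c : Fin m → ℝ,
      (∑ i : Fin m, lams i * c i) = ∑ i : {i // i ∈ K}, lams i.1 * c i.1 := by
    intro c
    rw [Finset.sum_coe_sort K (fun i => lams i * c i)]
    exact (Finset.sum_subset K.subset_univ (fun i _ hi => by rw [hlam0 i hi, zero_mul])).symm
  have hstat : ∀ j : Fin n, peval xs (MvPolynomial.pderiv j f)
      = ∑ i : {i // i ∈ K}, lams i.1 * peval xs (MvPolynomial.pderiv j (g i.1)) := by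
    intro j
    have h0 : (pgrad f xs - ∑ i, lams i • pgrad (g i) xs) j = (0 : EuclideanSpace ℝ (Fin n)) j := by
      rw [hkkt.1]
    rw [PiLp.sub_apply, aux_euc_sum_apply] at h0
    simp only [PiLp.smul_apply, smul_eq_mul, PiLp.zero_apply] at h0
    have h1 : peval xs (MvPolynomial.pderiv j f)
        = ∑ i : Fin m, lams i * peval xs (MvPolynomial.pderiv j (g i)) := by
      have := sub_eq_zero.mp h0
      exact this
    rw [h1, hres]
  have hFz : evalMap F zs = 0 := by
    ext v
    show MvPolynomial.eval (fun k => zs k) (F v) = 0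
    cases v with
    | inl j =>
      rw [hred1, map_sub, map_sum, heval_ren]
      have hterm : ∀ i : {i // i ∈ K},
          MvPolynomial.eval (fun k => zs k) (MvPolynomial.X (Sum.inr i)
            * MvPolynomial.rename Sum.inl (MvPolynomial.pderiv j (g i.1)))
          = lams i.1 * peval xs (MvPolynomial.pderiv j (g i.1)) := by
        intro i; rw [MvPolynomial.eval_mul, MvPolynomial.eval_X, heval_ren]; rfl
      rw [Finset.sum_congr rfl (fun i _ => hterm i)]
      exact sub_eq_zero.mpr (hstat j)
    | inr i =>
      rw [hred2, heval_ren]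
      rcases (hK i.1).1 i.2 with h | h
      · exact hkkt.2.1 i.1 h
      · exact h
  set T : Fin n → Fin n → ℝ := fun j k =>
    peval xs (MvPolynomial.pderiv k (MvPolynomial.pderiv j f))
      - ∑ i : {i // i ∈ K}, lams i.1
        * peval xs (MvPolynomial.pderiv k (MvPolynomial.pderiv j (g i.1))) with hTdef
  have hJ11 : ∀ j k : Fin n, jacMat F zs (Sum.inl j) (Sum.inl k) = T j k := by
    intro j k
    show MvPolynomial.eval (fun v => zs v) (MvPolynomial.pderiv (Sum.inl k) (F (Sum.inl j))) = _
    rw [hred1, map_sub, MvPolynomial.pderiv_rename Sum.inl_injective, aux_pderiv_inl_sum,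
      map_sub, map_sum, heval_ren]
    have hterm : ∀ i : {i // i ∈ K},
        MvPolynomial.eval (fun v => zs v) (MvPolynomial.X (Sum.inr i)
          * MvPolynomial.rename Sum.inl (MvPolynomial.pderiv k (MvPolynomial.pderiv j (g i.1))))
        = lams i.1 * peval xs (MvPolynomial.pderiv k (MvPolynomial.pderiv j (g i.1))) := by
      intro i; rw [MvPolynomial.eval_mul, MvPolynomial.eval_X, heval_ren]; rfl
    rw [Finset.sum_congr rfl (fun i _ => hterm i)]
  have hJ12 : ∀ (j : Fin n) (i : {i // i ∈ K}), jacMat F zs (Sum.inl j) (Sum.inr i)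
      = -(peval xs (MvPolynomial.pderiv j (g i.1))) := by
    intro j i
    show MvPolynomial.eval (fun v => zs v) (MvPolynomial.pderiv (Sum.inr i) (F (Sum.inl j))) = _
    rw [hred1, map_sub, aux_pderiv_inr_rename, aux_pderiv_inr_sum, zero_sub, map_neg, heval_ren]
  have hJ21 : ∀ (i : {i // i ∈ K}) (k : Fin n), jacMat F zs (Sum.inr i) (Sum.inl k)
      = peval xs (MvPolynomial.pderiv k (g i.1)) := by
    intro i k
    show MvPolynomial.eval (fun v => zs v) (MvPolynomial.pderiv (Sum.inl k) (F (Sum.inr i))) = _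
    rw [hred2, MvPolynomial.pderiv_rename Sum.inl_injective, heval_ren]
  have hJ22 : ∀ i i' : {i // i ∈ K}, jacMat F zs (Sum.inr i) (Sum.inr i') = 0 := by
    intro i i'
    show MvPolynomial.eval (fun v => zs v) (MvPolynomial.pderiv (Sum.inr i') (F (Sum.inr i))) = _
    rw [hred2, aux_pderiv_inr_rename, map_zero]
  have hlag : ∀ j k : Fin n,
      peval xs (MvPolynomial.pderiv j (MvPolynomial.pderiv k (lagPoly f g lams))) = T k j := by
    intro j k
    show MvPolynomial.eval (fun t => xs t) _ = _
    rw [lagPoly, map_sub, map_sub, map_sub, map_sum, map_sum, map_sum, hTdef]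
    have hterm : ∀ i : Fin m,
        MvPolynomial.eval (fun t => xs t)
          (MvPolynomial.pderiv j (MvPolynomial.pderiv k (MvPolynomial.C (lams i) * g i)))
        = lams i * peval xs (MvPolynomial.pderiv j (MvPolynomial.pderiv k (g i))) := by
      intro i
      rw [MvPolynomial.pderiv_C_mul, MvPolynomial.pderiv_C_mul, MvPolynomial.eval_mul,
        MvPolynomial.eval_C]
      rfl
    rw [Finset.sum_congr rfl (fun i _ => hterm i),
      hres (fun i => peval xs (MvPolynomial.pderiv j (MvPolynomial.pderiv k (g i))))]
    rfl
  have hker : ∀ w : (Fin n ⊕ {i // i ∈ K}) → ℝ, (jacMat F zs).mulVec w = 0 → w = 0 := by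
    intro w hw
    have hrow2 : ∀ i : {i // i ∈ K},
        ∑ k, peval xs (MvPolynomial.pderiv k (g i.1)) * w (Sum.inl k) = 0 := by
      intro i
      have h := congrFun hw (Sum.inr i)
      simp only [Matrix.mulVec, dotProduct, Fintype.sum_sum_type, hJ21, hJ22,
        zero_mul, Finset.sum_const_zero, add_zero, Pi.zero_apply] at h
      exact h
    have hrow1 : ∀ j : Fin n, (∑ k, T j k * w (Sum.inl k))
        = ∑ i : {i // i ∈ K}, peval xs (MvPolynomial.pderiv j (g i.1)) * w (Sum.inr i) := by
      intro j
      have h := congrFun hw (Sum.inl j)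
      simp only [Matrix.mulVec, dotProduct, Fintype.sum_sum_type, hJ11, hJ12,
        neg_mul, Finset.sum_neg_distrib, Pi.zero_apply] at h
      linarith [h]
    have hquad : ∑ j, ∑ k, w (Sum.inl j) * w (Sum.inl k)
        * peval xs (MvPolynomial.pderiv j (MvPolynomial.pderiv k (lagPoly f g lams))) = 0 := by
      calc ∑ j, ∑ k, w (Sum.inl j) * w (Sum.inl k)
            * peval xs (MvPolynomial.pderiv j (MvPolynomial.pderiv k (lagPoly f g lams)))
          = ∑ j, ∑ k, w (Sum.inl j) * w (Sum.inl k) * T k j := by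
            exact Finset.sum_congr rfl fun j _ => Finset.sum_congr rfl fun k _ => by
              rw [hlag j k]
        _ = ∑ k, ∑ j, w (Sum.inl j) * w (Sum.inl k) * T k j := Finset.sum_comm
        _ = ∑ j, ∑ k, w (Sum.inl j) * (T j k * w (Sum.inl k)) := by
            exact Finset.sum_congr rfl fun a _ => Finset.sum_congr rfl fun b _ => by ring
        _ = ∑ j, w (Sum.inl j) * ∑ k, T j k * w (Sum.inl k) := by
            exact Finset.sum_congr rfl fun a _ => (Finset.mul_sum _ _ _).symm
        _ = ∑ j, w (Sum.inl j)
            * ∑ i : {i // i ∈ K}, peval xs (MvPolynomial.pderiv j (g i.1)) * w (Sum.inr i) := by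
            exact Finset.sum_congr rfl fun a _ => by rw [hrow1 a]
        _ = ∑ i : {i // i ∈ K}, w (Sum.inr i)
            * ∑ j, peval xs (MvPolynomial.pderiv j (g i.1)) * w (Sum.inl j) := by
            simp_rw [Finset.mul_sum]
            rw [Finset.sum_comm]
            exact Finset.sum_congr rfl fun i _ => Finset.sum_congr rfl fun j _ => by ring
        _ = 0 := Finset.sum_eq_zero fun i _ => by rw [hrow2 i, mul_zero]
    have hwl : ∀ k, w (Sum.inl k) = 0 := by
      by_contra hcon
      push_neg at hcon
      obtain ⟨k0, hk0⟩ := hcon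
      have hvne : (WithLp.toLp 2 (fun k => w (Sum.inl k)) : EuclideanSpace ℝ (Fin n)) ≠ 0 := fun h =>
        hk0 (congrArg (fun v : EuclideanSpace ℝ (Fin n) => v k0) h)
      have hfeas : ∀ i ∈ K, ∑ k, (WithLp.toLp 2 (fun k => w (Sum.inl k)) : EuclideanSpace ℝ (Fin n)) k
          * peval xs (MvPolynomial.pderiv k (g i)) = 0 := by
        intro i hi
        have h2 := hrow2 ⟨i, hi⟩
        calc ∑ k, w (Sum.inl k) * peval xs (MvPolynomial.pderiv k (g i))
            = ∑ k, peval xs (MvPolynomial.pderiv k (g i)) * w (Sum.inl k) :=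
              Finset.sum_congr rfl fun k _ => mul_comm _ _
          _ = 0 := h2
      have hpos := hsosc _ hvne hfeas
      exact absurd hquad (ne_of_gt (by simpa using hpos))
    have hcomb : ∑ i : {i // i ∈ K}, w (Sum.inr i) • pgrad (g i.1) xs = 0 := by
      ext j
      show (∑ i : {i // i ∈ K}, w (Sum.inr i) • pgrad (g i.1) xs) j
        = (0 : EuclideanSpace ℝ (Fin n)) j
      rw [aux_euc_sum_apply]
      simp only [PiLp.smul_apply, smul_eq_mul, PiLp.zero_apply]
      have h1 := hrow1 j
      have h2 : ∑ k, T j k * w (Sum.inl k) = 0 :=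
        Finset.sum_eq_zero fun k _ => by rw [hwl k, mul_zero]
      rw [h2] at h1
      have h3 : ∑ i : {i // i ∈ K}, peval xs (MvPolynomial.pderiv j (g i.1)) * w (Sum.inr i)
          = 0 := h1.symm
      calc ∑ i : {i // i ∈ K}, w (Sum.inr i) * pgrad (g i.1) xs j
          = ∑ i : {i // i ∈ K}, peval xs (MvPolynomial.pderiv j (g i.1)) * w (Sum.inr i) :=
            Finset.sum_congr rfl fun i _ => mul_comm _ _
        _ = 0 := h3
    have hwr : ∀ i : {i // i ∈ K}, w (Sum.inr i) = 0 :=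
      Fintype.linearIndependent_iff.mp hlicq (fun i => w (Sum.inr i)) hcomb
    funext u
    cases u with
    | inl k => exact hwl k
    | inr i => exact hwr i
  have hdet : (jacMat F zs).det ≠ 0 := by
    intro h
    obtain ⟨v, hv, hv0⟩ := (Matrix.exists_mulVec_eq_zero_iff).2 h
    exact hv (hker v hv0)
  exact aux_main F zs hdet hFz hc
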